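/- arXiv:1501.04079 — 2 statements merged into one kernel-verified Lean document; each statement's English description precedes it below -/
import Mathlib

section
/- Let Γ be a countable discrete group and (X,μ) a standard probability space. For any convex subset K of A_∼(Γ,X,μ), the function x ↦ d(x,K) = inf_{b∈K} d(x,b) is convex: for all measure-preserving actions x, y of Γ on (X,μ) and all t ∈ [0,1], d(t x + (1−t) y, K) ≤ t·d(x,K) + (1−t)·d(y,K). In particular, for all actions x, y, c, e and t ∈ [0,1] one has d_H(C_{n,k}(t x + (1−t) y), C_{n,k}(t c + (1−t) e)) ≤ t·d_H(C_{n,k}(x),C_{n,k}(c)) + (1−t)·d_H(C_{n,k}(y),C_{n,k}(e)) for every n,k. -/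
open MeasureTheory Filter Topology Set

/-- A measure-preserving action of a group `Γ` on a measure space `(X, μ)`. -/
structure MPAction (Γ : Type*) [Group Γ] (X : Type*) [MeasurableSpace X]
    (μ : MeasureTheory.Measure X) where
  act : Γ → X → X
  measurePreserving_act : ∀ γ : Γ, MeasureTheory.MeasurePreserving (act γ) μ μ
  act_one : ∀ x, act 1 x = x
  act_mul : ∀ γ δ x, act (γ * δ) x = act γ (act δ x)

namespace MPAction

variable {Γ : Type*} [Group Γ] {X : Type*} [MeasurableSpace X] {μ : Measure X}
  {Y : Type*} [MeasurableSpace Y] {ν : Measure Y}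
  {W : Type*} [MeasurableSpace W] {ρ : Measure W}

/-- Weak containment of measure-preserving actions. -/
def WeaklyContained (a : MPAction Γ X μ) (b : MPAction Γ Y ν) : Prop :=
  ∀ (n : ℕ) (A : Fin n → Set X), (∀ i, MeasurableSet (A i)) →
    ∀ (F : Finset Γ) (ε : ℝ), 0 < ε →
      ∃ B : Fin n → Set Y, (∀ i, MeasurableSet (B i)) ∧
        ∀ γ ∈ F, ∀ i j : Fin n,
          |(μ (a.act γ '' A i ∩ A j)).toReal - (ν (b.act γ '' B i ∩ B j)).toReal| < ε

/-- Weak equivalence of measure-preserving actions. -/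
def WeakEquiv (a : MPAction Γ X μ) (b : MPAction Γ Y ν) : Prop :=
  WeaklyContained a b ∧ WeaklyContained b a

/-- A finite measurable partition of the space. -/
def IsPartition {k : ℕ} (A : Fin k → Set X) : Prop :=
  (∀ i, MeasurableSet (A i)) ∧ Pairwise (Function.onFun Disjoint A) ∧ (⋃ i, A i) = Set.univ

/-- The compact set `C_{n,k}(a) ⊆ [0,1]^{n × k × k}`: the closure of the collection of
matrices of measures `μ(γ_p^a A_q ∩ A_r)` over all measurable `k`-partitions, with respect
to the fixed enumeration `e` of the group. -/
noncomputable def Cnk (e : ℕ → Γ) (a : MPAction Γ X μ) (n k : ℕ) :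
    Set ((Fin n × Fin k × Fin k) → ℝ) :=
  closure { v | ∃ A : Fin k → Set X, IsPartition A ∧
    ∀ (p : Fin n) (q r : Fin k), v (p, q, r) = (μ (a.act (e p.1) '' A q ∩ A r)).toReal }

/-- The metric `d` on weak equivalence classes:
`d(a,b) = Σ_{n,k} 2^{-(n+k)} d_H(C_{n,k}(a), C_{n,k}(b))`. -/
noncomputable def dWE (e : ℕ → Γ) (a : MPAction Γ X μ) (b : MPAction Γ Y ν) : ℝ :=
  ∑' nk : ℕ × ℕ, (2 : ℝ) ^ (-(nk.1 : ℤ) - (nk.2 : ℤ)) *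
    Metric.hausdorffDist (Cnk e a nk.1 nk.2) (Cnk e b nk.1 nk.2)

section Mix

variable {ι : Type*} {Z : ι → Type*} [∀ i, MeasurableSpace (Z i)]

theorem measurable_sigmaMk' (i : ι) : Measurable (@Sigma.mk ι Z i) :=
  measurable_iff_le_map.2 (iInf_le _ i)

theorem measurable_of_sigma {δ : Type*} [MeasurableSpace δ] {f : Sigma Z → δ}
    (hf : ∀ i, Measurable (f ∘ Sigma.mk i)) : Measurable f := by
  intro s hs
  rw [Sigma.instMeasurableSpace, MeasurableSpace.measurableSet_iInf]
  intro i
  exact hf i hs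

/-- The measure `Σ_i λ_i ν_i` on the disjoint union `⊔_i Z_i`. -/
noncomputable def mixMeasure (lam : ι → ℝ) (νs : ∀ i, Measure (Z i)) :
    Measure ((i : ι) × Z i) :=
  Measure.sum fun i => ENNReal.ofReal (lam i) • (νs i).map (Sigma.mk i)

instance mixMeasure.instSFinite [Countable ι] (lam : ι → ℝ) (νs : ∀ i, Measure (Z i))
    [∀ i, SFinite (νs i)] : SFinite (mixMeasure lam νs) := by
  unfold mixMeasure
  infer_instance

/-- The convex combination `Σ_i λ_i a_i` of measure-preserving actions, acting on the
disjoint union `⊔_i Z_i` with the measure `Σ_i λ_i ν_i`. -/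
noncomputable def mix [Countable ι] {νs : ∀ i, Measure (Z i)} (lam : ι → ℝ)
    (a : ∀ i, MPAction Γ (Z i) (νs i)) : MPAction Γ ((i : ι) × Z i) (mixMeasure lam νs) where
  act γ p := ⟨p.1, (a p.1).act γ p.2⟩
  measurePreserving_act γ := by
    have hmeas : Measurable fun p : (i : ι) × Z i => (⟨p.1, (a p.1).act γ p.2⟩ : (i : ι) × Z i) := by
      apply measurable_of_sigma
      intro i
      exact (measurable_sigmaMk' i).comp ((a i).measurePreserving_act γ).measurable
    refine ⟨hmeas, ?_⟩
    refine Measure.ext fun s hs => ?_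
    rw [Measure.map_apply hmeas hs]
    rw [mixMeasure, Measure.sum_apply _ (hmeas hs), Measure.sum_apply _ hs]
    congr 1
    funext i
    rw [Measure.smul_apply, Measure.smul_apply,
      Measure.map_apply (measurable_sigmaMk' i) (hmeas hs),
      Measure.map_apply (measurable_sigmaMk' i) hs]
    congr 1
    have hpre : (Sigma.mk i) ⁻¹'
        ((fun p : (i : ι) × Z i => (⟨p.1, (a p.1).act γ p.2⟩ : (i : ι) × Z i)) ⁻¹' s)
        = ((a i).act γ) ⁻¹' (Sigma.mk i ⁻¹' s) := rfl
    rw [hpre]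
    exact ((a i).measurePreserving_act γ).measure_preimage
      ((measurable_sigmaMk' i) hs).nullMeasurableSet
  act_one p := by
    cases p with
    | mk i x => simp only [(a i).act_one]
  act_mul γ δ p := by
    cases p with
    | mk i x => simp only [(a i).act_mul]

end Mix

/-- The binary convex combination `t a + (1 - t) b` of two actions on `(X, μ)`,
realized on the disjoint union of two copies of `X` carrying measures `tμ` and `(1-t)μ`. -/
noncomputable def convComb (t : ℝ) (a b : MPAction Γ X μ) :
    MPAction Γ ((_ : Fin 2) × X) (mixMeasure ![t, 1 - t] fun _ => μ) :=
  mix (νs := fun _ => μ) ![t, 1 - t] ![a, b]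

/-- The trivial action. -/
def trivAction (Γ : Type*) [Group Γ] (Y : Type*) [MeasurableSpace Y] (ν : Measure Y) :
    MPAction Γ Y ν where
  act _ y := y
  measurePreserving_act _ := MeasurePreserving.id ν
  act_one _ := rfl
  act_mul _ _ _ := rfl

/-- The product of two measure-preserving actions. -/
noncomputable def prodAction [SFinite μ] [SFinite ν] (a : MPAction Γ X μ) (b : MPAction Γ Y ν) :
    MPAction Γ (X × Y) (μ.prod ν) where
  act γ := Prod.map (a.act γ) (b.act γ)
  measurePreserving_act γ := (a.measurePreserving_act γ).prod (b.measurePreserving_act γ)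
  act_one p := by simp [Prod.map, a.act_one, b.act_one]
  act_mul γ δ p := by simp [Prod.map, a.act_mul, b.act_mul]

/-- Stable weak containment: `a ≺_s b` iff `a ≺ ι × b`, where `ι` is the trivial action of `Γ`
on the standard probability space `(X₀, μ₀)`. -/
def StableWeaklyContained {X₀ : Type*} [MeasurableSpace X₀] (μ₀ : Measure X₀) [SFinite μ₀]
    (a : MPAction Γ W ρ) (b : MPAction Γ Y ν) [SFinite ν] : Prop :=
  WeaklyContained a (prodAction (trivAction Γ X₀ μ₀) b)

/-- Stable weak equivalence. -/
def StableWeakEquiv {X₀ : Type*} [MeasurableSpace X₀] (μ₀ : Measure X₀) [SFinite μ₀]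
    (a : MPAction Γ W ρ) [SFinite ρ] (b : MPAction Γ Y ν) [SFinite ν] : Prop :=
  StableWeaklyContained μ₀ a b ∧ StableWeaklyContained μ₀ b a

/-- An action is ergodic if every strictly invariant measurable set is null or conull. -/
def IsErgodicAction (a : MPAction Γ X μ) : Prop :=
  ∀ A : Set X, MeasurableSet A → (∀ γ, a.act γ ⁻¹' A = A) → μ A = 0 ∨ μ Aᶜ = 0

/-- An action is (essentially) free if almost every point has trivial stabilizer. -/
def IsFreeAction (a : MPAction Γ X μ) : Prop :=
  ∀ᵐ x ∂μ, ∀ γ : Γ, γ ≠ 1 → a.act γ x ≠ x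

end MPAction

/-!
The partition matrices of `t a + (1 - t) b` are exactly the points `t v + (1 - t) w` with `v`, `w`
partition matrices of `a` and `b`: a partition of the disjoint union is the same as a pair of
partitions of the two copies. As `(v, w) ↦ t v + (1 - t) w` is `t`-Lipschitz in `v` and
`(1 - t)`-Lipschitz in `w`, the Hausdorff distance between the sets `C_{n,k}` is convex, and
summing over `(n, k)` so is `d`. Moreover `d` only sees weak equivalence classes: if `a ≺ b`, sets
of `b` witnessing the weak containment of a partition of `a` nearly form a partition, and
disjointifying them costs little, so `C_{n,k}(a) ⊆ C_{n,k}(b)`. Hence for `b₁, b₂ ∈ K` the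
element of `K` equivalent to `t b₁ + (1 - t) b₂` is at distance at most
`t d(x, b₁) + (1 - t) d(y, b₂)` from `t x + (1 - t) y`, and one takes infima.
-/

open Metric
open scoped symmDiff

theorem inter_symmDiff_inter_subset {α : Type*} (S S' T T' : Set α) :
    (S ∩ T) ∆ (S' ∩ T') ⊆ S ∆ S' ∪ T ∆ T' := by
  grind

theorem measurableSet_disjointed {α ι : Type*} [MeasurableSpace α] [Preorder ι]
    [LocallyFiniteOrderBot ι] {B : ι → Set α} (hB : ∀ i, MeasurableSet (B i)) (i : ι) :
    MeasurableSet (disjointed B i) :=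
  disjointedRec (fun _ _ ht => ht.diff (hB _)) (hB i)

section HausdorffDistance

variable {α β γ : Type*} [PseudoMetricSpace α] [PseudoMetricSpace β] [PseudoMetricSpace γ]

theorem dist_smul_add_smul_le {E : Type*} [SeminormedAddCommGroup E] [NormedSpace ℝ E] {s t : ℝ}
    (hs : 0 ≤ s) (ht : 0 ≤ t) (v w v' w' : E) :
    dist (s • v + t • w) (s • v' + t • w') ≤ s * dist v v' + t * dist w w' := by
  calc dist (s • v + t • w) (s • v' + t • w')
      ≤ dist (s • v) (s • v') + dist (t • w) (t • w') := dist_add_add_le _ _ _ _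
    _ = s * dist v v' + t * dist w w' := by
      rw [dist_smul₀, dist_smul₀, Real.norm_of_nonneg hs, Real.norm_of_nonneg ht]

variable {f : α → β → γ} {s t : ℝ}
  (hf : ∀ a a' b b', dist (f a b) (f a' b') ≤ s * dist a a' + t * dist b b')
  {S₁ T₁ : Set α} {S₂ T₂ : Set β}

include hf in
theorem exists_mem_image2_dist_le (hs : 0 ≤ s) (ht : 0 ≤ t)
    (h₁ : hausdorffEDist S₁ T₁ ≠ ⊤) (h₂ : hausdorffEDist S₂ T₂ ≠ ⊤)
    {ε : ℝ} (hε : 0 < ε) {c : γ} (hc : c ∈ image2 f S₁ S₂) :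
    ∃ c' ∈ image2 f T₁ T₂,
      dist c c' ≤ s * (hausdorffDist S₁ T₁ + ε) + t * (hausdorffDist S₂ T₂ + ε) := by
  obtain ⟨a, ha, b, hb, rfl⟩ := hc
  obtain ⟨a', ha', hda⟩ := exists_dist_lt_of_hausdorffDist_lt ha (lt_add_of_pos_right _ hε) h₁
  obtain ⟨b', hb', hdb⟩ := exists_dist_lt_of_hausdorffDist_lt hb (lt_add_of_pos_right _ hε) h₂
  exact ⟨f a' b', mem_image2_of_mem ha' hb', (hf a a' b b').trans (by gcongr)⟩

include hf in
theorem hausdorffDist_image2_le (hs : 0 ≤ s) (ht : 0 ≤ t)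
    (h₁ : hausdorffEDist S₁ T₁ ≠ ⊤) (h₂ : hausdorffEDist S₂ T₂ ≠ ⊤) :
    hausdorffDist (image2 f S₁ S₂) (image2 f T₁ T₂) ≤
      s * hausdorffDist S₁ T₁ + t * hausdorffDist S₂ T₂ := by
  refine le_of_forall_pos_le_add fun ε hε => ?_
  obtain ⟨δ, hδ, hδε⟩ := exists_pos_mul_lt hε (s + t)
  have h₁' : hausdorffEDist T₁ S₁ ≠ ⊤ := by rwa [hausdorffEDist_comm]
  have h₂' : hausdorffEDist T₂ S₂ ≠ ⊤ := by rwa [hausdorffEDist_comm]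
  have hle : hausdorffDist (image2 f S₁ S₂) (image2 f T₁ T₂) ≤
      s * (hausdorffDist S₁ T₁ + δ) + t * (hausdorffDist S₂ T₂ + δ) := by
    refine hausdorffDist_le_of_mem_dist
      (add_nonneg (mul_nonneg hs (add_nonneg hausdorffDist_nonneg hδ.le))
        (mul_nonneg ht (add_nonneg hausdorffDist_nonneg hδ.le)))
      (fun c hc => exists_mem_image2_dist_le hf hs ht h₁ h₂ hδ hc) fun c hc => ?_
    rw [hausdorffDist_comm (s := S₁), hausdorffDist_comm (s := S₂)]
    exact exists_mem_image2_dist_le hf hs ht h₁' h₂' hδ hc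
  linarith

theorem hausdorffDist_le_of_subset_closedBall {S T : Set α} {x : α} {r : ℝ} (hr : 0 ≤ r)
    (hS : S ⊆ closedBall x r) (hT : T ⊆ closedBall x r) : hausdorffDist S T ≤ 2 * r := by
  rcases S.eq_empty_or_nonempty with rfl | hS'
  · simpa using hr
  rcases T.eq_empty_or_nonempty with rfl | hT'
  · simpa using hr
  calc hausdorffDist S T
      ≤ diam (S ∪ T) := hausdorffDist_le_diam hS' (isBounded_closedBall.subset hS) hT'
        (isBounded_closedBall.subset hT)
    _ ≤ diam (closedBall x r) := diam_mono (union_subset hS hT) isBounded_closedBall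
    _ ≤ 2 * r := diam_closedBall hr

end HausdorffDistance

theorem sInf_image_le_mul_add_mul {α : Type*} {K : Set α} {g f₁ f₂ : α → ℝ} {s t : ℝ}
    (hs : 0 ≤ s) (ht : 0 ≤ t) (hg : BddBelow (g '' K))
    (h : ∀ b₁ ∈ K, ∀ b₂ ∈ K, ∃ c ∈ K, g c ≤ s * f₁ b₁ + t * f₂ b₂) :
    sInf (g '' K) ≤ s * sInf (f₁ '' K) + t * sInf (f₂ '' K) := by
  rcases K.eq_empty_or_nonempty with rfl | hK
  · simp
  refine le_of_forall_pos_le_add fun ε hε => ?_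
  obtain ⟨δ, hδ, hδε⟩ := exists_pos_mul_lt hε (s + t)
  obtain ⟨_, ⟨b₁, hb₁, rfl⟩, h₁⟩ := Real.lt_sInf_add_pos (hK.image f₁) hδ
  obtain ⟨_, ⟨b₂, hb₂, rfl⟩, h₂⟩ := Real.lt_sInf_add_pos (hK.image f₂) hδ
  obtain ⟨c, hc, hgc⟩ := h b₁ hb₁ b₂ hb₂
  calc sInf (g '' K) ≤ g c := csInf_le hg (mem_image_of_mem g hc)
    _ ≤ s * f₁ b₁ + t * f₂ b₂ := hgc
    _ ≤ s * (sInf (f₁ '' K) + δ) + t * (sInf (f₂ '' K) + δ) := by gcongr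
    _ ≤ s * sInf (f₁ '' K) + t * sInf (f₂ '' K) + ε := by linarith

theorem summable_two_zpow_neg_sub :
    Summable fun nk : ℕ × ℕ => (2 : ℝ) ^ (-(nk.1 : ℤ) - (nk.2 : ℤ)) := by
  have h := summable_geometric_two.mul_of_nonneg summable_geometric_two
    (fun n => by positivity) (fun n => by positivity)
  refine h.congr fun nk => ?_
  rw [sub_eq_add_neg, zpow_add₀ two_ne_zero, zpow_neg, zpow_neg, zpow_natCast, zpow_natCast,
    one_div_pow, one_div_pow, one_div, one_div]

namespace MPAction

section Partitions

variable {X : Type*} [MeasurableSpace X] {k : ℕ}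

theorem IsPartition.preimage {Y : Type*} [MeasurableSpace Y] {A : Fin k → Set Y}
    (hA : IsPartition A) {f : X → Y} (hf : Measurable f) : IsPartition fun i => f ⁻¹' A i :=
  ⟨fun i => hf (hA.1 i), fun _ _ hij => (hA.2.1 hij).preimage f,
    by rw [← preimage_iUnion, hA.2.2, preimage_univ]⟩

theorem IsPartition.neZero [Nonempty X] {A : Fin k → Set X} (hA : IsPartition A) : NeZero k := by
  refine ⟨fun hk => ?_⟩
  subst hk
  obtain ⟨x⟩ := ‹Nonempty X›
  simpa [← hA.2.2] using mem_univ x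

theorem IsPartition.sum_measureReal {μ : Measure X} [IsProbabilityMeasure μ] {A : Fin k → Set X}
    (hA : IsPartition A) : ∑ i, μ.real (A i) = 1 := by
  rw [← measureReal_iUnion_fintype hA.2.1 hA.1, hA.2.2, probReal_univ]

def sigmaGlue {ι : Type*} {Z : ι → Type*} (C : ∀ i, Fin k → Set (Z i)) (q : Fin k) :
    Set ((i : ι) × Z i) :=
  {p | p.2 ∈ C p.1 q}

theorem isPartition_sigmaGlue {ι : Type*} {Z : ι → Type*} [∀ i, MeasurableSpace (Z i)]
    {C : ∀ i, Fin k → Set (Z i)} (hC : ∀ i, IsPartition (C i)) : IsPartition (sigmaGlue C) := by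
  refine ⟨fun q => measurableSet_setOfPred.2 (measurable_of_sigma fun i =>
      measurableSet_setOfPred.1 ((hC i).1 q)), fun q r hqr => ?_, ?_⟩
  · exact Set.disjoint_left.2 fun p hq hr => Set.disjoint_left.1 ((hC p.1).2.1 hqr) hq hr
  · refine eq_univ_of_forall fun p => ?_
    obtain ⟨q, hq⟩ := mem_iUnion.1 ((hC p.1).2.2 ▸ mem_univ p.2)
    exact mem_iUnion.2 ⟨q, hq⟩

end Partitions

section Actions

variable {Γ : Type*} [Group Γ] {X : Type*} [MeasurableSpace X] {μ : Measure X}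
  {Y : Type*} [MeasurableSpace Y] {ν : Measure Y}

theorem image_act_eq_preimage (a : MPAction Γ X μ) (γ : Γ) (S : Set X) :
    a.act γ '' S = a.act γ⁻¹ ⁻¹' S := by
  ext x
  constructor
  · rintro ⟨y, hy, rfl⟩
    simpa [← a.act_mul, a.act_one] using hy
  · exact fun hx => ⟨a.act γ⁻¹ x, hx, by simp [← a.act_mul, a.act_one]⟩

theorem image_act_one (a : MPAction Γ X μ) (S : Set X) : a.act 1 '' S = S := by
  rw [show a.act 1 = id from funext a.act_one, image_id]

theorem measurableSet_image_act (a : MPAction Γ X μ) (γ : Γ) {S : Set X}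
    (hS : MeasurableSet S) : MeasurableSet (a.act γ '' S) := by
  rw [image_act_eq_preimage]
  exact (a.measurePreserving_act γ⁻¹).measurable hS

noncomputable def partitionMatrix (e : ℕ → Γ) (a : MPAction Γ X μ) (n : ℕ) {k : ℕ}
    (A : Fin k → Set X) : Fin n × Fin k × Fin k → ℝ :=
  fun i => μ.real (a.act (e i.1) '' A i.2.1 ∩ A i.2.2)

noncomputable def partitionMatrices (e : ℕ → Γ) (a : MPAction Γ X μ) (n k : ℕ) :
    Set (Fin n × Fin k × Fin k → ℝ) :=
  partitionMatrix e a n '' {A | IsPartition A}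

theorem Cnk_eq_closure (e : ℕ → Γ) (a : MPAction Γ X μ) (n k : ℕ) :
    Cnk e a n k = closure (partitionMatrices e a n k) := by
  refine congrArg closure (Set.ext fun v => ⟨fun ⟨A, hA, hv⟩ => ⟨A, hA, ?_⟩, ?_⟩)
  · exact funext fun ⟨p, q, r⟩ => (hv p q r).symm
  · rintro ⟨A, hA, rfl⟩
    exact ⟨A, hA, fun _ _ _ => rfl⟩

variable [IsProbabilityMeasure μ]

theorem partitionMatrices_subset_closedBall (e : ℕ → Γ) (a : MPAction Γ X μ) (n k : ℕ) :
    partitionMatrices e a n k ⊆ closedBall 0 1 := by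
  rintro _ ⟨A, -, rfl⟩
  rw [mem_closedBall_zero_iff, pi_norm_le_iff_of_nonneg zero_le_one]
  exact fun i => (Real.norm_of_nonneg measureReal_nonneg).trans_le measureReal_le_one

theorem Cnk_subset_closedBall (e : ℕ → Γ) (a : MPAction Γ X μ) (n k : ℕ) :
    Cnk e a n k ⊆ closedBall 0 1 := by
  rw [Cnk_eq_closure]
  exact closure_minimal (partitionMatrices_subset_closedBall e a n k) isClosed_closedBall

theorem nonempty_partitionMatrices_iff (e : ℕ → Γ) (a : MPAction Γ X μ) (n k : ℕ) :
    (partitionMatrices e a n k).Nonempty ↔ 0 < k := by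
  have := nonempty_of_isProbabilityMeasure μ
  constructor
  · rintro ⟨_, A, hA, -⟩
    exact Nat.pos_of_ne_zero (hA.neZero).out
  · intro hk
    classical
    let z : Fin k := ⟨0, hk⟩
    refine ⟨_, fun i => if i = z then univ else ∅, ⟨fun i => ?_, fun i j hij => ?_, ?_⟩, rfl⟩
    · dsimp only
      split_ifs <;> simp
    · simp only [Function.onFun]
      split_ifs <;> simp_all
    · exact eq_univ_of_forall fun x => mem_iUnion.2 ⟨z, by simp⟩

theorem hausdorffEDist_partitionMatrices_ne_top [IsProbabilityMeasure ν]
    (e : ℕ → Γ) (a : MPAction Γ X μ) (b : MPAction Γ Y ν) (n k : ℕ) :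
    hausdorffEDist (partitionMatrices e a n k) (partitionMatrices e b n k) ≠ ⊤ := by
  rcases Nat.eq_zero_or_pos k with hk | hk
  · subst hk
    have ha : partitionMatrices e a n 0 = ∅ :=
      not_nonempty_iff_eq_empty.1 (by simp [nonempty_partitionMatrices_iff])
    have hb : partitionMatrices e b n 0 = ∅ :=
      not_nonempty_iff_eq_empty.1 (by simp [nonempty_partitionMatrices_iff])
    simp [ha, hb]
  · exact hausdorffEDist_ne_top_of_nonempty_of_bounded
      ((nonempty_partitionMatrices_iff e a n k).2 hk)
      ((nonempty_partitionMatrices_iff e b n k).2 hk)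
      (isBounded_closedBall.subset (partitionMatrices_subset_closedBall e a n k))
      (isBounded_closedBall.subset (partitionMatrices_subset_closedBall e b n k))

end Actions

section ConvexCombination

variable {Γ : Type*} [Group Γ] {X : Type*} [MeasurableSpace X] {μ : Measure X}

abbrev inCopy (X : Type*) (i : Fin 2) : X → (_ : Fin 2) × X := Sigma.mk (β := fun _ => X) i

theorem mixMeasure_fin_two_apply (t : ℝ) {S : Set ((_ : Fin 2) × X)} (hS : MeasurableSet S) :
    mixMeasure ![t, 1 - t] (fun _ => μ) S =
      ENNReal.ofReal t * μ (inCopy X 0 ⁻¹' S) + ENNReal.ofReal (1 - t) * μ (inCopy X 1 ⁻¹' S) := by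
  rw [mixMeasure, Measure.sum_apply _ hS, tsum_fintype, Fin.sum_univ_two]
  simp only [Measure.smul_apply, Measure.map_apply (measurable_sigmaMk' _) hS,
    Matrix.cons_val_zero, Matrix.cons_val_one, smul_eq_mul]

theorem isProbabilityMeasure_mixMeasure_fin_two [IsProbabilityMeasure μ] {t : ℝ}
    (ht : t ∈ Icc (0 : ℝ) 1) : IsProbabilityMeasure (mixMeasure ![t, 1 - t] fun _ => μ) := by
  constructor
  rw [mixMeasure_fin_two_apply t MeasurableSet.univ, preimage_univ, preimage_univ, measure_univ,
    mul_one, mul_one, ← ENNReal.ofReal_add ht.1 (sub_nonneg.2 ht.2), add_sub_cancel,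
    ENNReal.ofReal_one]

theorem measureReal_mixMeasure_fin_two [IsFiniteMeasure μ] {t : ℝ} (ht : t ∈ Icc (0 : ℝ) 1)
    {S : Set ((_ : Fin 2) × X)} (hS : MeasurableSet S) :
    (mixMeasure ![t, 1 - t] fun _ => μ).real S =
      t * μ.real (inCopy X 0 ⁻¹' S) + (1 - t) * μ.real (inCopy X 1 ⁻¹' S) := by
  rw [measureReal_def, mixMeasure_fin_two_apply t hS, ENNReal.toReal_add (by finiteness)
    (by finiteness), ENNReal.toReal_mul, ENNReal.toReal_mul, ENNReal.toReal_ofReal ht.1,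
    ENNReal.toReal_ofReal (sub_nonneg.2 ht.2), measureReal_def, measureReal_def]

theorem preimage_inCopy_zero_image_convComb_act (t : ℝ) (x y : MPAction Γ X μ) (γ : Γ)
    (S : Set ((_ : Fin 2) × X)) :
    inCopy X 0 ⁻¹' ((convComb t x y).act γ '' S) = x.act γ '' (inCopy X 0 ⁻¹' S) := by
  rw [image_act_eq_preimage, image_act_eq_preimage]
  rfl

theorem preimage_inCopy_one_image_convComb_act (t : ℝ) (x y : MPAction Γ X μ) (γ : Γ)
    (S : Set ((_ : Fin 2) × X)) :
    inCopy X 1 ⁻¹' ((convComb t x y).act γ '' S) = y.act γ '' (inCopy X 1 ⁻¹' S) := by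
  rw [image_act_eq_preimage, image_act_eq_preimage]
  rfl

theorem partitionMatrix_convComb [IsFiniteMeasure μ] (e : ℕ → Γ) {t : ℝ} (ht : t ∈ Icc (0 : ℝ) 1)
    (x y : MPAction Γ X μ) (n : ℕ) {k : ℕ} {C : Fin k → Set ((_ : Fin 2) × X)}
    (hC : ∀ q, MeasurableSet (C q)) :
    partitionMatrix e (convComb t x y) n C =
      t • partitionMatrix e x n (fun q => inCopy X 0 ⁻¹' C q) +
        (1 - t) • partitionMatrix e y n (fun q => inCopy X 1 ⁻¹' C q) := by
  funext ⟨p, q, r⟩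
  rw [partitionMatrix, measureReal_mixMeasure_fin_two ht
    ((measurableSet_image_act _ _ (hC q)).inter (hC r)), preimage_inter, preimage_inter,
    preimage_inCopy_zero_image_convComb_act, preimage_inCopy_one_image_convComb_act]
  rfl

theorem partitionMatrices_convComb [IsFiniteMeasure μ] (e : ℕ → Γ) {t : ℝ}
    (ht : t ∈ Icc (0 : ℝ) 1) (x y : MPAction Γ X μ) (n k : ℕ) :
    partitionMatrices e (convComb t x y) n k =
      image2 (fun v w => t • v + (1 - t) • w) (partitionMatrices e x n k)
        (partitionMatrices e y n k) := by
  ext v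
  constructor
  · rintro ⟨C, hC, rfl⟩
    exact ⟨_, ⟨_, hC.preimage (measurable_sigmaMk' 0), rfl⟩,
      _, ⟨_, hC.preimage (measurable_sigmaMk' 1), rfl⟩,
      (partitionMatrix_convComb e ht x y n hC.1).symm⟩
  · rintro ⟨_, ⟨A, hA, rfl⟩, _, ⟨B, hB, rfl⟩, rfl⟩
    have hAB : IsPartition (sigmaGlue ![A, B]) :=
      isPartition_sigmaGlue (Fin.forall_fin_two.2 ⟨hA, hB⟩)
    exact ⟨_, hAB, partitionMatrix_convComb e ht x y n hAB.1⟩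

theorem hausdorffDist_Cnk_convComb_le [IsProbabilityMeasure μ] (e : ℕ → Γ) {t : ℝ}
    (ht : t ∈ Icc (0 : ℝ) 1) (x y c f : MPAction Γ X μ) (n k : ℕ) :
    hausdorffDist (Cnk e (convComb t x y) n k) (Cnk e (convComb t c f) n k) ≤
      t * hausdorffDist (Cnk e x n k) (Cnk e c n k)
        + (1 - t) * hausdorffDist (Cnk e y n k) (Cnk e f n k) := by
  simp only [Cnk_eq_closure, hausdorffDist_closure]
  rw [partitionMatrices_convComb e ht, partitionMatrices_convComb e ht]
  exact hausdorffDist_image2_le (fun v v' w w' => dist_smul_add_smul_le ht.1 (sub_nonneg.2 ht.2)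
      v w v' w') ht.1 (sub_nonneg.2 ht.2)
    (hausdorffEDist_partitionMatrices_ne_top e x c n k)
    (hausdorffEDist_partitionMatrices_ne_top e y f n k)

end ConvexCombination

section Approximation

variable {Γ : Type*} [Group Γ] {X : Type*} [MeasurableSpace X] {μ : Measure X}
  {Y : Type*} [MeasurableSpace Y] {ν : Measure Y}

theorem abs_measureReal_image_act_inter_sub_le [IsFiniteMeasure ν] (b : MPAction Γ Y ν) (γ : Γ)
    {B₁ B₂ D₁ D₂ : Set Y} (hB₁ : MeasurableSet B₁) (hB₂ : MeasurableSet B₂)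
    (hD₁ : MeasurableSet D₁) (hD₂ : MeasurableSet D₂) :
    |ν.real (b.act γ '' B₁ ∩ B₂) - ν.real (b.act γ '' D₁ ∩ D₂)| ≤
      ν.real (B₁ ∆ D₁) + ν.real (B₂ ∆ D₂) := by
  have hb := b.measurePreserving_act γ⁻¹
  rw [image_act_eq_preimage, image_act_eq_preimage]
  calc |ν.real (b.act γ⁻¹ ⁻¹' B₁ ∩ B₂) - ν.real (b.act γ⁻¹ ⁻¹' D₁ ∩ D₂)|
      ≤ ν.real ((b.act γ⁻¹ ⁻¹' B₁ ∩ B₂) ∆ (b.act γ⁻¹ ⁻¹' D₁ ∩ D₂)) :=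
        abs_measureReal_sub_le_measureReal_symmDiff
          ((hb.measurable hB₁).inter hB₂).nullMeasurableSet
          ((hb.measurable hD₁).inter hD₂).nullMeasurableSet
    _ ≤ ν.real (b.act γ⁻¹ ⁻¹' (B₁ ∆ D₁) ∪ B₂ ∆ D₂) :=
        measureReal_mono (by rw [preimage_symmDiff]; exact inter_symmDiff_inter_subset _ _ _ _)
    _ ≤ ν.real (B₁ ∆ D₁) + ν.real (B₂ ∆ D₂) := by
        grw [measureReal_union_le, hb.measureReal_preimage (hB₁.symmDiff hD₁).nullMeasurableSet]

theorem measureReal_sdiff_disjointed_le [IsFiniteMeasure ν] {k : ℕ} {B : Fin k → Set Y} {δ : ℝ}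
    (hδ : 0 ≤ δ) (hinter : ∀ i j, i ≠ j → ν.real (B i ∩ B j) ≤ δ) (i : Fin k) :
    ν.real (B i \ disjointed B i) ≤ k * δ := by
  have hsub : B i \ disjointed B i ⊆ ⋃ j ∈ Finset.Iio i, B i ∩ B j := by
    rintro x ⟨hxi, hx⟩
    simp only [disjointed_eq_inter_compl, Set.mem_inter_iff, mem_iInter, mem_compl_iff, not_and,
      not_forall, not_not] at hx
    obtain ⟨j, hj, hxj⟩ := hx hxi
    exact mem_biUnion (Finset.mem_Iio.2 hj) ⟨hxi, hxj⟩
  calc ν.real (B i \ disjointed B i)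
      ≤ ∑ j ∈ Finset.Iio i, ν.real (B i ∩ B j) :=
        (measureReal_mono hsub (measure_ne_top _ _)).trans (measureReal_biUnion_finset_le _ _)
    _ ≤ ∑ _j ∈ Finset.Iio i, δ :=
        Finset.sum_le_sum fun j hj => hinter i j (Finset.mem_Iio.1 hj).ne'
    _ ≤ k * δ := by
        rw [Finset.sum_const, Fin.card_Iio, nsmul_eq_mul]
        gcongr
        exact_mod_cast i.2.le

theorem measureReal_compl_iUnion_le [IsProbabilityMeasure ν] {k : ℕ} {B : Fin k → Set Y}
    (hB : ∀ i, MeasurableSet (B i)) {δ : ℝ} (hδ : 0 ≤ δ)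
    (hinter : ∀ i j, i ≠ j → ν.real (B i ∩ B j) ≤ δ) (hsum : 1 - δ ≤ ∑ i, ν.real (B i)) :
    ν.real (⋃ i, B i)ᶜ ≤ (k ^ 2 + 1) * δ := by
  have hunion : ν.real (⋃ i, B i) = ∑ i, ν.real (disjointed B i) := by
    rw [← iUnion_disjointed, measureReal_iUnion_fintype (disjoint_disjointed B)
      (measurableSet_disjointed hB)]
  have hdisj : ∀ i, ν.real (B i) - k * δ ≤ ν.real (disjointed B i) := fun i => by
    have := measureReal_sdiff (μ := ν) (disjointed_subset B i) (measurableSet_disjointed hB i)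
    linarith [measureReal_sdiff_disjointed_le hδ hinter i]
  have hsum' := Finset.sum_le_sum fun i (_ : i ∈ Finset.univ) => hdisj i
  rw [Finset.sum_sub_distrib, Finset.sum_const, Finset.card_univ, Fintype.card_fin,
    nsmul_eq_mul] at hsum'
  rw [measureReal_compl (MeasurableSet.iUnion hB), probReal_univ]
  nlinarith

theorem isPartition_disjointed_union_compl {k : ℕ} [NeZero k] {B : Fin k → Set Y}
    (hB : ∀ i, MeasurableSet (B i)) :
    IsPartition fun i => disjointed B i ∪ (if i = 0 then (⋃ j, B j)ᶜ else ∅) := by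
  have hdisj : ∀ i, Disjoint (disjointed B i) (⋃ j, B j)ᶜ := fun i =>
    disjoint_compl_right.mono_left ((disjointed_subset B i).trans (subset_iUnion B i))
  refine ⟨fun i => (measurableSet_disjointed hB i).union ?_, fun i j hij => ?_, ?_⟩
  · split_ifs
    exacts [(MeasurableSet.iUnion hB).compl, MeasurableSet.empty]
  · simp only [Function.onFun]
    split_ifs with hi hj hj
    · exact absurd (hi.trans hj.symm) hij
    · rw [union_empty, disjoint_union_left]
      exact ⟨disjoint_disjointed B hij, (hdisj j).symm⟩
    · rw [union_empty, disjoint_union_right]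
      exact ⟨disjoint_disjointed B hij, hdisj i⟩
    · rw [union_empty, union_empty]
      exact disjoint_disjointed B hij
  · refine eq_univ_of_forall fun x => ?_
    by_cases hx : x ∈ ⋃ i, B i
    · rw [← iUnion_disjointed] at hx
      obtain ⟨i, hi⟩ := mem_iUnion.1 hx
      exact mem_iUnion.2 ⟨i, Or.inl hi⟩
    · exact mem_iUnion.2 ⟨0, Or.inr (by simpa using hx)⟩

theorem exists_isPartition_measureReal_symmDiff_le [IsProbabilityMeasure ν] {k : ℕ} [NeZero k]
    {B : Fin k → Set Y} (hB : ∀ i, MeasurableSet (B i)) {δ : ℝ} (hδ : 0 ≤ δ)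
    (hinter : ∀ i j, i ≠ j → ν.real (B i ∩ B j) ≤ δ) (hsum : 1 - δ ≤ ∑ i, ν.real (B i)) :
    ∃ D : Fin k → Set Y, IsPartition D ∧ ∀ i, ν.real (B i ∆ D i) ≤ (k ^ 2 + k + 1) * δ := by
  refine ⟨_, isPartition_disjointed_union_compl hB, fun i => ?_⟩
  have hsub : B i ∆ (disjointed B i ∪ (if i = 0 then (⋃ j, B j)ᶜ else ∅)) ⊆
      (B i \ disjointed B i) ∪ (⋃ j, B j)ᶜ := by
    rintro x (⟨hxB, hxD⟩ | ⟨hxE | hxR, hxB⟩)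
    · exact Or.inl ⟨hxB, fun h => hxD (Or.inl h)⟩
    · exact absurd (disjointed_subset B i hxE) hxB
    · split_ifs at hxR
      exacts [Or.inr hxR, hxR.elim]
  calc ν.real (B i ∆ (disjointed B i ∪ (if i = 0 then (⋃ j, B j)ᶜ else ∅)))
      ≤ ν.real (B i \ disjointed B i) + ν.real (⋃ j, B j)ᶜ :=
        (measureReal_mono hsub).trans (measureReal_union_le _ _)
    _ ≤ k * δ + (k ^ 2 + 1) * δ := add_le_add (measureReal_sdiff_disjointed_le hδ hinter i)
        (measureReal_compl_iUnion_le hB hδ hinter hsum)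
    _ = (k ^ 2 + k + 1) * δ := by ring

end Approximation

section WeakContainment

variable {Γ : Type*} [Group Γ] {X : Type*} [MeasurableSpace X] {μ : Measure X}
  {Y : Type*} [MeasurableSpace Y] {ν : Measure Y} [IsProbabilityMeasure μ] [IsProbabilityMeasure ν]

theorem exists_isPartition_measureReal_symmDiff_le_of_abs_sub_le {k : ℕ} {A : Fin k → Set X}
    (hA : IsPartition A) {B : Fin k → Set Y} (hB : ∀ i, MeasurableSet (B i)) {δ : ℝ}
    (hδ : 0 ≤ δ) (hAB : ∀ q r, |μ.real (A q ∩ A r) - ν.real (B q ∩ B r)| ≤ δ) :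
    ∃ D : Fin k → Set Y, IsPartition D ∧
      ∀ i, ν.real (B i ∆ D i) ≤ (k ^ 2 + k + 1) * ((k + 1) * δ) := by
  have := nonempty_of_isProbabilityMeasure μ
  have := hA.neZero
  refine exists_isPartition_measureReal_symmDiff_le hB (by positivity) (fun i j hij => ?_) ?_
  · have h := hAB i j
    rw [(hA.2.1 hij).inter_eq, measureReal_empty, zero_sub, abs_neg] at h
    nlinarith [le_abs_self (ν.real (B i ∩ B j))]
  · have h : ∀ i, μ.real (A i) - δ ≤ ν.real (B i) := fun i => by
      have := hAB i i
      rw [inter_self, inter_self] at this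
      linarith [(abs_le.1 this).2]
    have hsum := Finset.sum_le_sum fun i (_ : i ∈ Finset.univ) => h i
    rw [Finset.sum_sub_distrib, hA.sum_measureReal, Finset.sum_const, Finset.card_univ,
      Fintype.card_fin, nsmul_eq_mul] at hsum
    nlinarith

theorem exists_isPartition_abs_sub_lt_of_weaklyContained {a : MPAction Γ X μ}
    {b : MPAction Γ Y ν} (h : WeaklyContained a b) {k : ℕ} {A : Fin k → Set X}
    (hA : IsPartition A) (F : Finset Γ) {ε : ℝ} (hε : 0 < ε) :
    ∃ D : Fin k → Set Y, IsPartition D ∧ ∀ γ ∈ F, ∀ q r,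
      |μ.real (a.act γ '' A q ∩ A r) - ν.real (b.act γ '' D q ∩ D r)| < ε := by
  classical
  obtain ⟨δ, hδ, hδε⟩ := exists_pos_mul_lt hε (1 + 2 * ((k ^ 2 + k + 1) * (k + 1)))
  obtain ⟨B, hB, hAB⟩ := h k A hA.1 (insert 1 F) δ hδ
  -- at `γ = 1` the weak containment says that `B` is nearly a partition
  obtain ⟨D, hD, hBD⟩ := exists_isPartition_measureReal_symmDiff_le_of_abs_sub_le hA hB hδ.le
    fun q r => by
      simpa only [image_act_one, measureReal_def] using (hAB 1 (Finset.mem_insert_self 1 F) q r).le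
  refine ⟨D, hD, fun γ hγ q r => ?_⟩
  calc |μ.real (a.act γ '' A q ∩ A r) - ν.real (b.act γ '' D q ∩ D r)|
      ≤ |μ.real (a.act γ '' A q ∩ A r) - ν.real (b.act γ '' B q ∩ B r)|
        + |ν.real (b.act γ '' B q ∩ B r) - ν.real (b.act γ '' D q ∩ D r)| := abs_sub_le _ _ _
    _ < δ + ((k ^ 2 + k + 1) * ((k + 1) * δ) + (k ^ 2 + k + 1) * ((k + 1) * δ)) :=
        add_lt_add_of_lt_of_le (hAB γ (Finset.mem_insert_of_mem hγ) q r)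
          ((abs_measureReal_image_act_inter_sub_le b γ (hB q) (hB r) (hD.1 q) (hD.1 r)).trans
            (add_le_add (hBD q) (hBD r)))
    _ = (1 + 2 * ((k ^ 2 + k + 1) * (k + 1))) * δ := by ring
    _ < ε := hδε

theorem Cnk_subset_of_weaklyContained {a : MPAction Γ X μ} {b : MPAction Γ Y ν}
    (h : WeaklyContained a b) (e : ℕ → Γ) (n k : ℕ) : Cnk e a n k ⊆ Cnk e b n k := by
  classical
  rw [Cnk_eq_closure, Cnk_eq_closure]
  refine closure_minimal ?_ isClosed_closure
  rintro _ ⟨A, hA, rfl⟩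
  refine Metric.mem_closure_iff.2 fun ε hε => ?_
  obtain ⟨D, hD, hAD⟩ :=
    exists_isPartition_abs_sub_lt_of_weaklyContained h hA ((Finset.range n).image e) hε
  refine ⟨partitionMatrix e b n D, ⟨D, hD, rfl⟩, (dist_pi_lt_iff hε).2 fun ⟨p, q, r⟩ => ?_⟩
  exact hAD _ (Finset.mem_image_of_mem e (Finset.mem_range.2 p.2)) q r

theorem Cnk_eq_of_weakEquiv {a : MPAction Γ X μ} {b : MPAction Γ Y ν} (h : WeakEquiv a b)
    (e : ℕ → Γ) (n k : ℕ) : Cnk e a n k = Cnk e b n k :=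
  (Cnk_subset_of_weaklyContained h.1 e n k).antisymm (Cnk_subset_of_weaklyContained h.2 e n k)

end WeakContainment

section Distance

variable {Γ : Type*} [Group Γ] {X : Type*} [MeasurableSpace X] {μ : Measure X}
  {Y : Type*} [MeasurableSpace Y] {ν : Measure Y}

theorem summable_dWE [IsProbabilityMeasure μ] [IsProbabilityMeasure ν] (e : ℕ → Γ)
    (a : MPAction Γ X μ) (b : MPAction Γ Y ν) :
    Summable fun nk : ℕ × ℕ => (2 : ℝ) ^ (-(nk.1 : ℤ) - (nk.2 : ℤ)) *
      hausdorffDist (Cnk e a nk.1 nk.2) (Cnk e b nk.1 nk.2) :=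
  (summable_two_zpow_neg_sub.mul_right 2).of_nonneg_of_le
    (fun _ => mul_nonneg (by positivity) hausdorffDist_nonneg) fun nk =>
      mul_le_mul_of_nonneg_left ((hausdorffDist_le_of_subset_closedBall zero_le_one
        (Cnk_subset_closedBall e a _ _) (Cnk_subset_closedBall e b _ _)).trans_eq (mul_one 2))
        (by positivity)

theorem dWE_nonneg (e : ℕ → Γ) (a : MPAction Γ X μ) (b : MPAction Γ Y ν) : 0 ≤ dWE e a b :=
  tsum_nonneg fun _ => mul_nonneg (by positivity) hausdorffDist_nonneg

theorem dWE_congr_right [IsProbabilityMeasure ν] {W : Type*} [MeasurableSpace W] {ρ : Measure W}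
    [IsProbabilityMeasure ρ] (e : ℕ → Γ) (a : MPAction Γ X μ) {b : MPAction Γ Y ν}
    {b' : MPAction Γ W ρ} (h : WeakEquiv b b') : dWE e a b = dWE e a b' :=
  tsum_congr fun nk => by rw [Cnk_eq_of_weakEquiv h]

theorem dWE_convComb_le [IsProbabilityMeasure μ] (e : ℕ → Γ) {t : ℝ} (ht : t ∈ Icc (0 : ℝ) 1)
    (x y c f : MPAction Γ X μ) :
    dWE e (convComb t x y) (convComb t c f) ≤ t * dWE e x c + (1 - t) * dWE e y f := by
  have := isProbabilityMeasure_mixMeasure_fin_two (μ := μ) ht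
  have hx := (summable_dWE e x c).mul_left t
  have hy := (summable_dWE e y f).mul_left (1 - t)
  rw [dWE, dWE, dWE, ← tsum_mul_left, ← tsum_mul_left, ← hx.tsum_add hy]
  refine (summable_dWE e _ _).tsum_le_tsum (fun nk => ?_) (hx.add hy)
  calc (2 : ℝ) ^ (-(nk.1 : ℤ) - (nk.2 : ℤ)) *
        hausdorffDist (Cnk e (convComb t x y) nk.1 nk.2) (Cnk e (convComb t c f) nk.1 nk.2)
      ≤ (2 : ℝ) ^ (-(nk.1 : ℤ) - (nk.2 : ℤ)) *
          (t * hausdorffDist (Cnk e x nk.1 nk.2) (Cnk e c nk.1 nk.2)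
            + (1 - t) * hausdorffDist (Cnk e y nk.1 nk.2) (Cnk e f nk.1 nk.2)) := by
        gcongr
        exact hausdorffDist_Cnk_convComb_le e ht x y c f nk.1 nk.2
    _ = t * ((2 : ℝ) ^ (-(nk.1 : ℤ) - (nk.2 : ℤ)) *
            hausdorffDist (Cnk e x nk.1 nk.2) (Cnk e c nk.1 nk.2))
          + (1 - t) * ((2 : ℝ) ^ (-(nk.1 : ℤ) - (nk.2 : ℤ)) *
            hausdorffDist (Cnk e y nk.1 nk.2) (Cnk e f nk.1 nk.2)) := by ring

end Distance

end MPAction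

theorem dist_to_convex_set_is_convex_general
    (Γ : Type) [Group Γ]
    (X : Type) [MeasurableSpace X]
    (μ : Measure X) [IsProbabilityMeasure μ]
    (e : ℕ → Γ) :
    (∀ K : Set (MPAction Γ X μ),
      (∀ a ∈ K, ∀ b ∈ K, ∀ t ∈ Set.Icc (0:ℝ) 1,
        ∃ c ∈ K, MPAction.WeakEquiv c (MPAction.convComb t a b)) →
      ∀ (x y : MPAction Γ X μ) (t : ℝ), t ∈ Set.Icc (0:ℝ) 1 →
        sInf ((fun b => MPAction.dWE e (MPAction.convComb t x y) b) '' K) ≤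
          t * sInf ((fun b => MPAction.dWE e x b) '' K)
            + (1 - t) * sInf ((fun b => MPAction.dWE e y b) '' K))
    ∧ (∀ (x y c f : MPAction Γ X μ) (t : ℝ), t ∈ Set.Icc (0:ℝ) 1 → ∀ n k : ℕ,
        Metric.hausdorffDist (MPAction.Cnk e (MPAction.convComb t x y) n k)
            (MPAction.Cnk e (MPAction.convComb t c f) n k) ≤
          t * Metric.hausdorffDist (MPAction.Cnk e x n k) (MPAction.Cnk e c n k)
            + (1 - t) * Metric.hausdorffDist (MPAction.Cnk e y n k)
                (MPAction.Cnk e f n k)) := by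
  refine ⟨fun K hK x y t ht => ?_,
    fun x y c f t ht => MPAction.hausdorffDist_Cnk_convComb_le e ht x y c f⟩
  have := MPAction.isProbabilityMeasure_mixMeasure_fin_two (μ := μ) ht
  refine sInf_image_le_mul_add_mul ht.1 (sub_nonneg.2 ht.2)
    ⟨0, forall_mem_image.2 fun b _ => MPAction.dWE_nonneg e _ b⟩ fun b₁ hb₁ b₂ hb₂ => ?_
  obtain ⟨c, hcK, hc⟩ := hK b₁ hb₁ b₂ hb₂ t ht
  exact ⟨c, hcK,
    (MPAction.dWE_congr_right e _ hc).trans_le (MPAction.dWE_convComb_le e ht x y b₁ b₂)⟩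

/-- For any convex subset `K` of `A_∼(Γ,X,μ)` (given as a set of actions
closed, up to weak equivalence, under convex combinations), the distance function
`x ↦ d(x,K) = inf_{b ∈ K} d(x,b)` is convex; moreover the Hausdorff distance between the sets
`C_{n,k}` of convex combinations satisfies the corresponding convexity inequality. -/
theorem dist_to_convex_set_is_convex
    (Γ : Type) [Group Γ] [Countable Γ]
    (X : Type) [MeasurableSpace X] [StandardBorelSpace X]
    (μ : Measure X) [IsProbabilityMeasure μ] [NullSingletonClass μ]
    (e : ℕ → Γ) (he : Function.Surjective e) :
    (∀ K : Set (MPAction Γ X μ),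
      (∀ a ∈ K, ∀ b ∈ K, ∀ t ∈ Set.Icc (0:ℝ) 1,
        ∃ c ∈ K, MPAction.WeakEquiv c (MPAction.convComb t a b)) →
      ∀ (x y : MPAction Γ X μ) (t : ℝ), t ∈ Set.Icc (0:ℝ) 1 →
        sInf ((fun b => MPAction.dWE e (MPAction.convComb t x y) b) '' K) ≤
          t * sInf ((fun b => MPAction.dWE e x b) '' K)
            + (1 - t) * sInf ((fun b => MPAction.dWE e y b) '' K))
    ∧ (∀ (x y c f : MPAction Γ X μ) (t : ℝ), t ∈ Set.Icc (0:ℝ) 1 → ∀ n k : ℕ,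
        Metric.hausdorffDist (MPAction.Cnk e (MPAction.convComb t x y) n k)
            (MPAction.Cnk e (MPAction.convComb t c f) n k) ≤
          t * Metric.hausdorffDist (MPAction.Cnk e x n k) (MPAction.Cnk e c n k)
            + (1 - t) * Metric.hausdorffDist (MPAction.Cnk e y n k)
                (MPAction.Cnk e f n k)) :=
  dist_to_convex_set_is_convex_general Γ X μ e
end

section
/- Let Γ be a countable discrete group acting by a Borel action a on a Polish space Y, and let M_a(Y) be the space of a-invariant Borel probability measures on Y with the weak* topology. Then the map Θ sending ν ∈ M_a(Y) to the weak equivalence class of the measure-preserving action a_ν = Γ↷^a(Y,ν) is Borel, as a map from M_a(Y) to the space A*_∼(Γ) of weak equivalence classes of all measure-preserving actions of Γ on probability spaces, equipped with the metric d(a,b) = Σ_{n,k} 2^{−(n+k)} d_H(C_{n,k}(a),C_{n,k}(b)). Equivalently, for every ν_0 ∈ M_a(Y), N ∈ ℕ, and r ≥ 0, the set {ν ∈ M_a(Y) : d_H(C_{n,k}(a_{ν_0}), C_{n,k}(a_ν)) ≤ r for all n,k ≤ N} is Borel. -/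
open MeasureTheory Filter Topology Set

/-- The set `C_{n,k}` associated to a Borel action `act` of `Γ` and an arbitrary Borel
probability measure `ν` on `Y`. -/
noncomputable def CnkRaw {Γ : Type*} [Group Γ] {Y : Type*} [MeasurableSpace Y]
    (e : ℕ → Γ) (act : Γ → Y → Y) (ν : Measure Y) (n k : ℕ) :
    Set ((Fin n × Fin k × Fin k) → ℝ) :=
  closure { v | ∃ A : Fin k → Set Y,
    ((∀ i, MeasurableSet (A i)) ∧ Pairwise (Function.onFun Disjoint A) ∧
      (⋃ i, A i) = Set.univ) ∧
    ∀ (p : Fin n) (q r : Fin k), v (p, q, r) = (ν (act (e p.1) '' A q ∩ A r)).toReal }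

/-!
Fix a countable algebra of sets `𝒜` generating the Borel σ-algebra. For a finite invariant
measure `ν`, every measurable partition is approximated in `ν`-measure by a partition with
pieces in `𝒜`, and by invariance `ν(γ A_q ∩ A_r)` moves by at most `ν(A_q ∆ E_q) + ν(A_r ∆ E_r)`.
So `C_{n,k}(a_ν)` is the closure of the countably many points given by `𝒜`-partitions, each
depending measurably on `ν`; the Hausdorff distance between the closures of two countable
families is a countable `sup`/`inf` of distances between their points, hence measurable in `ν`.
-/

open MeasurableSpace
open scoped symmDiff Function

section HausdorffDistance

variable {α ι M : Type*} [MeasurableSpace α] [Countable ι]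
  [PseudoMetricSpace M] [MeasurableSpace M] [OpensMeasurableSpace M]

theorem measurable_hausdorffDist_range {f : α → ι → M} (hf : ∀ i, Measurable fun a => f a i)
    (g : ι → M) : Measurable fun a => Metric.hausdorffDist (range g) (range (f a)) := by
  simp only [Metric.hausdorffDist, Metric.hausdorffEDist_def, Metric.infEDist, iSup_range,
    iInf_range]
  refine Measurable.ennreal_toReal <|
    .sup (.iSup fun i => .iInf fun j => ?_) (.iSup fun j => .iInf fun i => ?_)
  · exact (continuous_const.edist continuous_id).measurable.comp (hf j)
  · exact (continuous_id.edist continuous_const).measurable.comp (hf j)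

end HausdorffDistance

theorem MeasurableSpace.exists_countable_isSetAlgebra_eq_generateFrom {Y : Type*}
    [m : MeasurableSpace Y] [CountablyGenerated Y] :
    ∃ 𝒜 : Set (Set Y), 𝒜.Countable ∧ IsSetAlgebra 𝒜 ∧ m = generateFrom 𝒜 :=
  ⟨generateSetAlgebra (countableGeneratingSet Y),
    countable_generateSetAlgebra countable_countableGeneratingSet,
    isSetAlgebra_generateSetAlgebra,
    by rw [generateFrom_generateSetAlgebra_eq, generateFrom_countableGeneratingSet]⟩

section Partitions

variable {Y : Type*} {k : ℕ}

def partitionsIn (𝒜 : Set (Set Y)) (k : ℕ) : Set (Fin k → Set Y) :=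
  {A | (∀ i, A i ∈ 𝒜) ∧ Pairwise (Disjoint on A) ∧ ⋃ i, A i = univ}

theorem countable_partitionsIn {𝒜 : Set (Set Y)} (h𝒜 : 𝒜.Countable) :
    (partitionsIn 𝒜 k).Countable :=
  (countable_pi fun _ => h𝒜).mono fun _ hA => hA.1

-- `E := disjointed fun i => E' i ∪ (⋃ j, E' j)ᶜ` agrees with `A` off `⋃ j, A j ∆ E' j`.
theorem MeasureTheory.IsSetAlgebra.exists_partitionsIn_symmDiff_subset {𝒜 : Set (Set Y)}
    (h𝒜 : IsSetAlgebra 𝒜) {A : Fin k → Set Y} (hdisj : Pairwise (Disjoint on A))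
    (hcov : ⋃ i, A i = univ) {E' : Fin k → Set Y} (hE' : ∀ i, E' i ∈ 𝒜) :
    ∃ E ∈ partitionsIn 𝒜 k, ∀ i, A i ∆ E i ⊆ ⋃ j, A j ∆ E' j := by
  set F : Fin k → Set Y := fun i => E' i ∪ (⋃ j, E' j)ᶜ
  have hF : ∀ i, F i ∈ 𝒜 := fun i => h𝒜.union_mem (hE' i) <| h𝒜.compl_mem <| by
    simpa using h𝒜.biUnion_mem Finset.univ fun j _ => hE' j
  refine ⟨disjointed F, ⟨h𝒜.isSetRing.disjointed_mem hF, disjoint_disjointed F, ?_⟩, ?_⟩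
  · refine iUnion_disjointed.trans (eq_univ_of_forall fun x => ?_)
    obtain ⟨i, hi⟩ := mem_iUnion.1 (hcov ▸ mem_univ x)
    by_cases hx : x ∈ ⋃ j, E' j
    · obtain ⟨j, hj⟩ := mem_iUnion.1 hx
      exact mem_iUnion.2 ⟨j, Or.inl hj⟩
    · exact mem_iUnion.2 ⟨i, Or.inr hx⟩
  · intro i x hx
    by_contra hxU
    have hAE' : ∀ j, x ∈ E' j ↔ x ∈ A j := fun j => by
      have : x ∉ A j ∆ E' j := fun h => hxU (mem_iUnion.2 ⟨j, h⟩)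
      rw [mem_symmDiff] at this
      tauto
    have hFA : ∀ j, x ∈ F j ↔ x ∈ A j := by
      obtain ⟨j₀, hj₀⟩ := mem_iUnion.1 (hcov ▸ mem_univ x)
      have : x ∈ ⋃ j, E' j := mem_iUnion.2 ⟨j₀, (hAE' j₀).2 hj₀⟩
      simp only [F, mem_union, mem_compl_iff, this, not_true_eq_false, or_false, hAE',
        implies_true]
    have hdisjA : disjointed A i = A i := disjointed_eq_self fun j hj => hdisj hj.ne
    have : x ∈ disjointed F i ↔ x ∈ A i := by
      rw [← hdisjA]
      simp only [disjointed_eq_inter_compl, mem_inter_iff, mem_iInter, mem_compl_iff, hFA]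
    exact (mem_symmDiff.1 hx).elim (fun h => h.2 (this.2 h.1)) fun h => h.2 (this.1 h.1)

end Partitions

section Measure

variable {Y : Type*} [MeasurableSpace Y] {μ : Measure Y} [IsFiniteMeasure μ]

theorem MeasureTheory.IsSetAlgebra.exists_partitionsIn_measureReal_symmDiff_lt {k : ℕ}
    {𝒜 : Set (Set Y)} (h𝒜 : IsSetAlgebra 𝒜) (hgen : ‹MeasurableSpace Y› = generateFrom 𝒜)
    {A : Fin k → Set Y} (hA : ∀ i, MeasurableSet (A i)) (hdisj : Pairwise (Disjoint on A))
    (hcov : ⋃ i, A i = univ) {ε : ℝ} (hε : 0 < ε) :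
    ∃ E ∈ partitionsIn 𝒜 k, ∀ i, μ.real (A i ∆ E i) < ε := by
  set δ := ε / (k + 1)
  have hδ : 0 < δ := by positivity
  choose E' hE'𝒜 hE' using fun i =>
    (Measure.MeasureDense.of_generateFrom_isSetAlgebra_finite μ h𝒜 hgen).approx (A i) (hA i)
      (measure_ne_top μ _) δ hδ
  obtain ⟨E, hE, hAE⟩ := h𝒜.exists_partitionsIn_symmDiff_subset hdisj hcov hE'𝒜
  refine ⟨E, hE, fun i => ?_⟩
  calc μ.real (A i ∆ E i) ≤ μ.real (⋃ j, A j ∆ E' j) := measureReal_mono (hAE i)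
    _ ≤ ∑ j, μ.real (A j ∆ E' j) := measureReal_iUnion_fintype_le _
    _ ≤ ∑ _j : Fin k, δ :=
        Finset.sum_le_sum fun j _ => (ENNReal.toReal_lt_of_lt_ofReal (hE' j)).le
    _ = k * δ := by simp
    _ < ε := by
      rw [mul_div_assoc', div_lt_iff₀ (by positivity)]
      linarith

theorem MeasureTheory.MeasurePreserving.abs_measureReal_preimage_inter_sub_le {f : Y → Y}
    (hf : MeasurePreserving f μ μ) {A A' B B' : Set Y} (hA : MeasurableSet A)
    (hA' : MeasurableSet A') (hB : MeasurableSet B) (hB' : MeasurableSet B') :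
    |μ.real (f ⁻¹' A ∩ B) - μ.real (f ⁻¹' A' ∩ B')| ≤ μ.real (A ∆ A') + μ.real (B ∆ B') :=
  calc _ ≤ μ.real ((f ⁻¹' A ∩ B) ∆ (f ⁻¹' A' ∩ B')) :=
        abs_measureReal_sub_le_measureReal_symmDiff
          ((hf.measurable hA).inter hB).nullMeasurableSet
          ((hf.measurable hA').inter hB').nullMeasurableSet
    _ ≤ μ.real (f ⁻¹' (A ∆ A') ∪ B ∆ B') := measureReal_mono fun x => by
        simp only [mem_symmDiff, mem_inter_iff, mem_union, mem_preimage]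
        tauto
    _ ≤ μ.real (f ⁻¹' (A ∆ A')) + μ.real (B ∆ B') := measureReal_union_le _ _
    _ = μ.real (A ∆ A') + μ.real (B ∆ B') := by
        rw [hf.measureReal_preimage (hA.symmDiff hA').nullMeasurableSet]

end Measure

section BorelAction

variable {Γ Y : Type*} [Group Γ] {act : Γ → Y → Y}

theorem image_act_eq_preimage_act_inv (hone : ∀ y, act 1 y = y)
    (hmul : ∀ γ δ y, act (γ * δ) y = act γ (act δ y)) (γ : Γ) (S : Set Y) :
    act γ '' S = act γ⁻¹ ⁻¹' S :=
  congrFun (image_eq_preimage_of_inverse (fun y => by rw [← hmul, inv_mul_cancel, hone])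
    fun y => by rw [← hmul, mul_inv_cancel, hone]) S

variable [MeasurableSpace Y]

noncomputable def measureMatrix (e : ℕ → Γ) (act : Γ → Y → Y) (ν : Measure Y) (n k : ℕ)
    (A : Fin k → Set Y) : Fin n × Fin k × Fin k → ℝ :=
  fun x => ν.real (act (e x.1) '' A x.2.1 ∩ A x.2.2)

variable (hone : ∀ y, act 1 y = y) (hmul : ∀ γ δ y, act (γ * δ) y = act γ (act δ y))
include hone hmul

theorem measurable_measureMatrix (hmeas : ∀ γ, Measurable (act γ)) (e : ℕ → Γ) {n k : ℕ}
    {A : Fin k → Set Y} (hA : ∀ i, MeasurableSet (A i)) :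
    Measurable fun ν : Measure Y => measureMatrix e act ν n k A :=
  measurable_pi_lambda _ fun x => by
    simp only [measureMatrix, image_act_eq_preimage_act_inv hone hmul, Measure.real]
    exact (Measure.measurable_coe ((hmeas _ (hA _)).inter (hA _))).ennreal_toReal

theorem cnkRaw_eq_closure_range {𝒜 : Set (Set Y)} (h𝒜 : IsSetAlgebra 𝒜)
    (hgen : ‹MeasurableSpace Y› = generateFrom 𝒜) (e : ℕ → Γ) {ν : Measure Y}
    [IsFiniteMeasure ν] (hν : ∀ γ, MeasurePreserving (act γ) ν ν) (n k : ℕ) :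
    CnkRaw e act ν n k =
      closure (range fun E : partitionsIn 𝒜 k => measureMatrix e act ν n k E) := by
  have h𝒜m : ∀ s ∈ 𝒜, MeasurableSet s := fun s hs => hgen ▸ measurableSet_generateFrom hs
  refine (closure_minimal ?_ isClosed_closure).antisymm (closure_mono ?_)
  · rintro v ⟨A, ⟨hA, hdisj, hcov⟩, hv⟩
    obtain rfl : v = measureMatrix e act ν n k A := funext fun x => hv x.1 x.2.1 x.2.2
    refine Metric.mem_closure_iff.2 fun ε hε => ?_
    obtain ⟨E, hE, hAE⟩ :=
      h𝒜.exists_partitionsIn_measureReal_symmDiff_lt (μ := ν) hgen hA hdisj hcov (half_pos hε)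
    refine ⟨_, ⟨⟨E, hE⟩, rfl⟩, (dist_pi_lt_iff hε).2 fun ⟨p, q, r⟩ => ?_⟩
    simp only [measureMatrix, Real.dist_eq, image_act_eq_preimage_act_inv hone hmul]
    calc _ ≤ ν.real (A q ∆ E q) + ν.real (A r ∆ E r) :=
          (hν _).abs_measureReal_preimage_inter_sub_le (hA q) (h𝒜m _ (hE.1 q)) (hA r)
            (h𝒜m _ (hE.1 r))
      _ < ε / 2 + ε / 2 := add_lt_add (hAE q) (hAE r)
      _ = ε := add_halves ε
  · rintro _ ⟨E, rfl⟩
    exact ⟨E, ⟨fun i => h𝒜m _ (E.2.1 i), E.2.2⟩, fun p q r => rfl⟩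

theorem measurable_hausdorffDist_cnkRaw [CountablyGenerated Y] {α : Type*}
    [MeasurableSpace α] {ν : α → Measure Y} (hν : Measurable ν) [∀ a, IsFiniteMeasure (ν a)]
    (hνact : ∀ a γ, MeasurePreserving (act γ) (ν a) (ν a)) (ν₀ : Measure Y) [IsFiniteMeasure ν₀]
    (hν₀act : ∀ γ, MeasurePreserving (act γ) ν₀ ν₀) (e : ℕ → Γ) (n k : ℕ) :
    Measurable fun a => Metric.hausdorffDist (CnkRaw e act ν₀ n k) (CnkRaw e act (ν a) n k) := by
  obtain ⟨𝒜, h𝒜c, h𝒜, hgen⟩ := exists_countable_isSetAlgebra_eq_generateFrom (Y := Y)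
  have : Countable (partitionsIn 𝒜 k) := (countable_partitionsIn h𝒜c).to_subtype
  simp only [cnkRaw_eq_closure_range hone hmul h𝒜 hgen e (hνact _),
    cnkRaw_eq_closure_range hone hmul h𝒜 hgen e hν₀act, Metric.hausdorffDist_closure]
  refine measurable_hausdorffDist_range (fun E => ?_) _
  exact (measurable_measureMatrix hone hmul (fun γ => (hν₀act γ).measurable) e
    fun i => hgen ▸ measurableSet_generateFrom (E.2.1 i)).comp hν

end BorelAction

theorem weak_class_map_is_borel_general
    (Γ : Type) [Group Γ]
    (Y : Type) [TopologicalSpace Y] [PolishSpace Y] [MeasurableSpace Y] [BorelSpace Y]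
    (act : Γ → Y → Y)
    (hmeas : ∀ γ, Measurable (act γ))
    (hone : ∀ y, act 1 y = y)
    (hmul : ∀ γ δ y, act (γ * δ) y = act γ (act δ y))
    (e : ℕ → Γ)
    (ν₀ : {m : Measure Y // IsProbabilityMeasure m ∧ ∀ γ, m.map (act γ) = m})
    (N : ℕ) (r : ℝ) :
    MeasurableSet {ν : {m : Measure Y // IsProbabilityMeasure m ∧ ∀ γ, m.map (act γ) = m} |
      ∀ n ≤ N, ∀ k ≤ N,
        Metric.hausdorffDist (CnkRaw e act (ν₀ : Measure Y) n k)
          (CnkRaw e act (ν : Measure Y) n k) ≤ r} := by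
  have (ν : {m : Measure Y // IsProbabilityMeasure m ∧ ∀ γ, m.map (act γ) = m}) :
      IsFiniteMeasure (ν : Measure Y) := by have := ν.2.1; infer_instance
  have hact (ν : {m : Measure Y // IsProbabilityMeasure m ∧ ∀ γ, m.map (act γ) = m}) (γ : Γ) :
      MeasurePreserving (act γ) ν ν := ⟨hmeas γ, ν.2.2 γ⟩
  simp only [ofPred_forall]
  exact .iInter fun n => .iInter fun _ => .iInter fun k => .iInter fun _ =>
    measurableSet_le (measurable_hausdorffDist_cnkRaw hone hmul measurable_subtype_coe hact
      ν₀ (hact ν₀) e n k) measurable_const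

/-- Let `Γ` be a countable group acting by a Borel action `act` on a Polish
space `Y` and let `M_a(Y)` be the space of invariant Borel probability measures on `Y`.  Then
the map `ν ↦ [a_ν]` from `M_a(Y)` to the space of weak equivalence classes (with the metric
`d`) is Borel; equivalently, for every `ν₀ ∈ M_a(Y)`, `N ∈ ℕ` and `r ≥ 0`, the set
`{ν ∈ M_a(Y) : d_H(C_{n,k}(a_{ν₀}), C_{n,k}(a_ν)) ≤ r for all n,k ≤ N}` is Borel in
`M_a(Y)`. -/
theorem weak_class_map_is_borel
    (Γ : Type) [Group Γ] [Countable Γ]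
    (Y : Type) [TopologicalSpace Y] [PolishSpace Y] [MeasurableSpace Y] [BorelSpace Y]
    (act : Γ → Y → Y)
    (hmeas : ∀ γ, Measurable (act γ))
    (hone : ∀ y, act 1 y = y)
    (hmul : ∀ γ δ y, act (γ * δ) y = act γ (act δ y))
    (e : ℕ → Γ) (he : Function.Surjective e)
    (ν₀ : {m : Measure Y // IsProbabilityMeasure m ∧ ∀ γ, m.map (act γ) = m})
    (N : ℕ) (r : ℝ) (hr : 0 ≤ r) :
    MeasurableSet {ν : {m : Measure Y // IsProbabilityMeasure m ∧ ∀ γ, m.map (act γ) = m} |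
      ∀ n ≤ N, ∀ k ≤ N,
        Metric.hausdorffDist (CnkRaw e act (ν₀ : Measure Y) n k)
          (CnkRaw e act (ν : Measure Y) n k) ≤ r} :=
  weak_class_map_is_borel_general Γ Y act hmeas hone hmul e ν₀ N r
end
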